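/- The Lie complexity of the Fibonacci word f satisfies: L_f(n) = 1 if n = 0, or n = F_k for some k ≥ 4, or n = F_k + F_{k−3} for some k ≥ 4; L_f(n) = 2 if n ∈ {1, 2}; and L_f(n) = 0 otherwise, where F_k are the Fibonacci numbers with F_0 = 0, F_1 = 1. -/

import Mathlib

variable {α : Type*}

/-- `u` occurs in the infinite word `w` at position `i`. -/
def FactorAt (w : ℕ → α) (i : ℕ) (u : List α) : Prop :=
  u = (List.range u.length).map fun k => w (i + k)

/-- The set of (finite) factors of the right-infinite word `w`. -/
def Fac (w : ℕ → α) : Set (List α) := {u | ∃ i, FactorAt w i u}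

/-- The Lie complexity: the number of rotation classes of length-`n` words all of
whose members are factors of `w`. -/
noncomputable def LieComplexity (w : ℕ → α) (n : ℕ) : ℕ :=
  Set.ncard {q : Quotient (List.IsRotated.setoid α) |
    ∃ u : List α, Quotient.mk _ u = q ∧ u.length = n ∧ ∀ v, u.IsRotated v → v ∈ Fac w}

/-- The Fibonacci morphism `0 ↦ 01`, `1 ↦ 0`. -/
def fibMorph (a : ℕ) : List ℕ := if a = 0 then [0, 1] else [0]

/-- Iterates of the Fibonacci morphism applied to `0`. -/
def fibStr : ℕ → List ℕ
  | 0 => [0]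
  | k + 1 => (fibStr k).flatMap fibMorph

/-- The Fibonacci word, the fixed point of `0 ↦ 01`, `1 ↦ 0`.  (The prefix
`fibStr (n + 2)` has length `> n`, and these prefixes are nested.) -/
def fibWord (n : ℕ) : ℕ := (fibStr (n + 2)).getD n 0

/-!
Write `σ = fibSubst` for the Fibonacci morphism acting on words. The factors of the Fibonacci
word are the factors of the words `σ (fibStr k)`, and a word `σ w` splits uniquely into blocks
`01` and `0`. This recognizability gives desubstitution: a binary word `x` is a factor as soon as
`σ x ++ [0]` is one. In particular `11` and `000 = σ 11 ++ 0` are not factors.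

If all rotations of `u` are factors, `u` contains a `1` and `|u| ≥ 2`, then `u` is a rotation of
`σ w` for a strictly shorter binary word `w` all of whose rotations are again factors; conversely
`σ` preserves this property. Descending to the words without `1` (which are `[]`, `0`, `00`), the
words all of whose rotations are factors are, up to rotation, exactly `[]`, `1`, `σᵏ 0 = fibStr k`
and `σᵏ 00`, of lengths `0`, `1`, `F (k + 2)` and `2 F (k + 2) = F (k + 3) + F k`. These lengths
coincide only for the pairs `0, 1` (length 1) and `01, 00` (length 2).
-/

/-! ### Factors and rotations of words -/

theorem factorAt_cons {w : ℕ → α} {i : ℕ} {a : α} {u : List α} :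
    FactorAt w i (a :: u) ↔ w i = a ∧ FactorAt w (i + 1) u := by
  simp [FactorAt, List.range_succ_eq_map, Function.comp_def, Nat.add_assoc, Nat.add_comm 1,
    eq_comm]

theorem factorAt_append {w : ℕ → α} {i : ℕ} {u v : List α} :
    FactorAt w i (u ++ v) ↔ FactorAt w i u ∧ FactorAt w (i + u.length) v := by
  induction u generalizing i with
  | nil => simp [FactorAt]
  | cons a u ih => simp [factorAt_cons, ih, and_assoc, Nat.add_assoc, Nat.add_comm 1]

theorem FactorAt.eq_of_length_eq {w : ℕ → α} {i : ℕ} {u v : List α} (hu : FactorAt w i u)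
    (hv : FactorAt w i v) (h : u.length = v.length) : u = v := by
  rw [hu, hv, h]

theorem mem_fac_of_infix {w : ℕ → α} {u v : List α} (h : u <:+: v) (hv : v ∈ Fac w) :
    u ∈ Fac w := by
  obtain ⟨i, hi⟩ := hv
  obtain ⟨s, t, rfl⟩ := h
  rw [factorAt_append, factorAt_append] at hi
  exact ⟨i + s.length, hi.1.2⟩

theorem exists_append_singleton_mem_fac {w : ℕ → α} {u : List α} (hu : u ∈ Fac w) :
    ∃ m, u ++ [w m] ∈ Fac w := by
  obtain ⟨i, hi⟩ := hu
  exact ⟨i + u.length, i, factorAt_append.2 ⟨hi, factorAt_cons.2 ⟨rfl, rfl⟩⟩⟩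

theorem infix_of_factorAt_zero {w : ℕ → α} {i : ℕ} {t u : List α} (ht : FactorAt w 0 t)
    (hu : FactorAt w i u) (hlen : i + u.length ≤ t.length) : u <:+: t := by
  rw [← List.take_append_drop i t, ← List.take_append_drop u.length (t.drop i),
    factorAt_append, factorAt_append] at ht
  have hu' : u = (t.drop i).take u.length :=
    hu.eq_of_length_eq (by simpa [show i ≤ t.length by omega] using ht.2.1) (by simp; omega)
  rw [hu']
  exact ⟨t.take i, _, by rw [List.append_assoc, List.take_append_drop, List.take_append_drop]⟩

theorem List.IsRotated.exists_eq_append {l l' : List α} (h : l ~r l') :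
    ∃ a b, l = a ++ b ∧ l' = b ++ a := by
  obtain ⟨n, hn, rfl⟩ := List.isRotated_iff_mod.mp h
  exact ⟨l.take n, l.drop n, (List.take_append_drop n l).symm,
    List.rotate_eq_drop_append_take hn⟩

def AllRotationsIn (S : Set (List α)) (u : List α) : Prop :=
  ∀ v, u.IsRotated v → v ∈ S

theorem AllRotationsIn.mem {S : Set (List α)} {u : List α} (h : AllRotationsIn S u) : u ∈ S :=
  h u (List.IsRotated.refl u)

theorem AllRotationsIn.of_isRotated {S : Set (List α)} {u v : List α} (h : AllRotationsIn S u)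
    (huv : u ~r v) : AllRotationsIn S v :=
  fun _ hv => h _ (huv.trans hv)

theorem lieComplexity_eq_ncard_image {w : ℕ → α} {R : Set (List α)}
    (hR : ∀ u, AllRotationsIn (Fac w) u ↔ ∃ v ∈ R, u ~r v) (n : ℕ) :
    LieComplexity w n =
      (Quotient.mk (List.IsRotated.setoid α) '' {v ∈ R | v.length = n}).ncard := by
  unfold LieComplexity
  congr 1
  ext q
  constructor
  · rintro ⟨u, rfl, rfl, hu⟩
    obtain ⟨v, hv, huv⟩ := (hR u).1 hu
    exact ⟨v, ⟨hv, huv.perm.length_eq.symm⟩, Quotient.sound huv.symm⟩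
  · rintro ⟨v, ⟨hv, rfl⟩, rfl⟩
    exact ⟨v, rfl, rfl, (hR v).2 ⟨v, hv, List.IsRotated.refl v⟩⟩

/-! ### The Fibonacci morphism on words -/

def fibSubst (x : List ℕ) : List ℕ := x.flatMap fibMorph

@[simp] theorem fibSubst_nil : fibSubst [] = [] := rfl

@[simp] theorem fibSubst_append (x y : List ℕ) : fibSubst (x ++ y) = fibSubst x ++ fibSubst y :=
  List.flatMap_append

theorem fibSubst_cons (a : ℕ) (x : List ℕ) :
    fibSubst (a :: x) = 0 :: ((fibMorph a).tail ++ fibSubst x) := by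
  simp only [fibSubst, List.flatMap_cons, fibMorph]
  split_ifs <;> rfl

theorem fibSubst_cons_zero (x : List ℕ) : fibSubst (0 :: x) = 0 :: 1 :: fibSubst x := rfl

theorem fibSubst_cons_of_ne_zero {a : ℕ} (ha : a ≠ 0) (x : List ℕ) :
    fibSubst (a :: x) = 0 :: fibSubst x := by
  simp [fibSubst_cons, fibMorph, ha]

theorem fibSubst_ne_one_cons (x r : List ℕ) : fibSubst x ≠ 1 :: r := by
  cases x <;> simp [fibSubst_cons]

theorem fibSubst_append_zero_cons_ne_one_cons (x t r : List ℕ) :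
    fibSubst x ++ 0 :: t ≠ 1 :: r := by
  cases x <;> simp [fibSubst_cons]

theorem le_one_of_mem_fibSubst {x : List ℕ} {a : ℕ} (ha : a ∈ fibSubst x) : a ≤ 1 := by
  obtain ⟨b, -, hb⟩ := List.mem_flatMap.mp ha
  unfold fibMorph at hb
  split_ifs at hb <;> simp at hb <;> omega

theorem zero_mem_of_one_mem_fibSubst {x : List ℕ} (h : 1 ∈ fibSubst x) : 0 ∈ x := by
  obtain ⟨b, hb, h1⟩ := List.mem_flatMap.mp h
  unfold fibMorph at h1
  split_ifs at h1 with hb0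
  · exact hb0 ▸ hb
  · simp at h1

theorem length_fibSubst (x : List ℕ) : (fibSubst x).length = x.length + x.count 0 := by
  induction x with
  | nil => rfl
  | cons a x ih =>
    by_cases ha : a = 0
    · subst ha
      simp only [fibSubst_cons_zero, List.length_cons, ih, List.count_cons_self]
      omega
    · simp only [fibSubst_cons_of_ne_zero ha, List.length_cons, ih, List.count_cons_of_ne ha]
      omega

theorem List.IsRotated.fibSubst {x y : List ℕ} (h : x ~r y) : fibSubst x ~r fibSubst y := by
  obtain ⟨a, b, rfl, rfl⟩ := h.exists_eq_append
  simpa using List.isRotated_append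

theorem fibSubst_eq_append {w a b : List ℕ} (h : fibSubst w = a ++ b) :
    (∃ w₁ w₂, w = w₁ ++ w₂ ∧ a = fibSubst w₁ ∧ b = fibSubst w₂) ∨
      ∃ w₁ w₂, w = w₁ ++ 0 :: w₂ ∧ a = fibSubst w₁ ++ [0] ∧ b = 1 :: fibSubst w₂ := by
  induction w generalizing a with
  | nil =>
    obtain ⟨rfl, rfl⟩ := List.append_eq_nil_iff.mp h.symm
    exact Or.inl ⟨[], [], rfl, rfl, rfl⟩
  | cons c w ih =>
    rcases a with _ | ⟨x, a⟩
    · exact Or.inl ⟨[], c :: w, rfl, rfl, by simpa using h.symm⟩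
    by_cases hc : c = 0
    · subst hc
      rw [fibSubst_cons_zero, List.cons_append, List.cons.injEq] at h
      obtain ⟨rfl, h⟩ := h
      rcases a with _ | ⟨y, a⟩
      · exact Or.inr ⟨[], w, rfl, rfl, h.symm⟩
      rw [List.cons_append, List.cons.injEq] at h
      obtain ⟨rfl, h⟩ := h
      rcases ih h with ⟨w₁, w₂, rfl, rfl, rfl⟩ | ⟨w₁, w₂, rfl, rfl, rfl⟩
      · exact Or.inl ⟨0 :: w₁, w₂, rfl, rfl, rfl⟩
      · exact Or.inr ⟨0 :: w₁, w₂, rfl, rfl, rfl⟩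
    · rw [fibSubst_cons_of_ne_zero hc, List.cons_append, List.cons.injEq] at h
      obtain ⟨rfl, h⟩ := h
      rcases ih h with ⟨w₁, w₂, rfl, rfl, rfl⟩ | ⟨w₁, w₂, rfl, rfl, rfl⟩
      · exact Or.inl ⟨c :: w₁, w₂, rfl, (fibSubst_cons_of_ne_zero hc _).symm, rfl⟩
      · exact Or.inr ⟨c :: w₁, w₂, rfl, by simp [fibSubst_cons_of_ne_zero hc], rfl⟩

theorem prefix_of_fibSubst_eq_fibSubst_append {x y r : List ℕ} (hx : ∀ a ∈ x, a ≤ 1)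
    (hy : ∀ a ∈ y, a ≤ 1) (h : fibSubst y = fibSubst x ++ 0 :: r) : x <+: y := by
  induction x generalizing y with
  | nil => exact List.nil_prefix
  | cons a x ih =>
    rcases y with _ | ⟨b, y⟩
    · simp at h
    have ha := hx a (by simp)
    have hb := hy b (by simp)
    have hab : a = b := by
      interval_cases a <;> interval_cases b
      · rfl
      · simp only [fibSubst_cons_zero, fibSubst_cons_of_ne_zero one_ne_zero, List.cons_append,
          List.cons.injEq, true_and] at h
        exact (fibSubst_ne_one_cons _ _ h).elim
      · simp only [fibSubst_cons_zero, fibSubst_cons_of_ne_zero one_ne_zero, List.cons_append,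
          List.cons.injEq, true_and] at h
        exact (fibSubst_append_zero_cons_ne_one_cons _ _ _ h.symm).elim
      · rfl
    subst hab
    have h' : fibSubst y = fibSubst x ++ 0 :: r := by
      simpa [fibSubst_cons] using h
    exact List.cons_prefix_cons.mpr
      ⟨rfl, ih (fun c hc => hx c (by simp [hc])) (fun c hc => hy c (by simp [hc])) h'⟩

theorem exists_fibSubst_eq_zero_cons : ∀ v : List ℕ, (∀ a ∈ v, a ≤ 1) → ¬ [1, 1] <:+: v →
    ∃ w, (∀ a ∈ w, a ≤ 1) ∧ fibSubst w = 0 :: v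
  | [], _, _ => ⟨[1], by simp, rfl⟩
  | [1], _, _ => ⟨[0], by simp, rfl⟩
  | 0 :: v, hv, h11 => by
    obtain ⟨w, hw, hσ⟩ := exists_fibSubst_eq_zero_cons v (fun a ha => hv a (by simp [ha]))
      (fun h => h11 (h.trans (List.infix_cons (List.infix_refl v))))
    exact ⟨1 :: w, by simpa using hw, by rw [fibSubst_cons_of_ne_zero one_ne_zero, hσ]⟩
  | 1 :: 0 :: v, hv, h11 => by
    obtain ⟨w, hw, hσ⟩ := exists_fibSubst_eq_zero_cons v (fun a ha => hv a (by simp [ha]))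
      (fun h => h11 (h.trans ⟨[1, 0], [], by simp⟩))
    exact ⟨0 :: w, by simpa using hw, by rw [fibSubst_cons_zero, hσ]⟩
  | 1 :: (b + 1) :: v, hv, h11 => by
    obtain rfl : b = 0 := by have := hv (b + 1) (by simp); omega
    exact (h11 ⟨[], v, rfl⟩).elim
  | (a + 2) :: v, hv, _ => by simpa using hv (a + 2) (by simp)

/-! ### Factors of the Fibonacci word -/

theorem fibStr_succ (k : ℕ) : fibStr (k + 1) = fibSubst (fibStr k) := rfl

theorem fibStr_add_two (k : ℕ) : fibStr (k + 2) = fibStr (k + 1) ++ fibStr k := by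
  induction k with
  | zero => rfl
  | succ k ih => exact (congrArg fibSubst ih).trans (fibSubst_append _ _)

theorem length_fibStr (k : ℕ) : (fibStr k).length = Nat.fib (k + 2) := by
  induction k using Nat.twoStepInduction with
  | zero => rfl
  | one => rfl
  | more k ih₀ ih₁ =>
    rw [fibStr_add_two, List.length_append, ih₀, ih₁, Nat.fib_add_two (n := k + 2), add_comm]

theorem fibStr_prefix_of_le {k m : ℕ} (h : k ≤ m) : fibStr k <+: fibStr m := by
  induction m, h using Nat.le_induction with
  | base => exact List.prefix_refl _
  | succ m _ ih =>
    refine ih.trans ?_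
    cases m with
    | zero => exact ⟨[1], rfl⟩
    | succ m => exact ⟨fibStr m, (fibStr_add_two m).symm⟩

theorem getElem_fibStr {k j : ℕ} (h : j < (fibStr k).length) : (fibStr k)[j] = fibWord j := by
  have hj : j < (fibStr (j + 2)).length := by
    rw [length_fibStr]; have := Nat.le_fib_add_one (j + 2 + 2); omega
  rw [fibWord, List.getD_eq_getElem _ _ hj]
  rcases le_total k (j + 2) with hk | hk
  · exact (fibStr_prefix_of_le hk).getElem h
  · exact ((fibStr_prefix_of_le hk).getElem hj).symm

theorem factorAt_zero_fibStr (k : ℕ) : FactorAt fibWord 0 (fibStr k) := by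
  refine List.ext_getElem (by simp) fun j h _ => ?_
  simp [getElem_fibStr h]

theorem mem_fac_fibWord_iff {u : List ℕ} : u ∈ Fac fibWord ↔ ∃ k, u <:+: fibStr k := by
  refine ⟨fun ⟨i, hi⟩ => ?_, fun ⟨k, hk⟩ => mem_fac_of_infix hk ⟨0, factorAt_zero_fibStr k⟩⟩
  have hlen : i + u.length ≤ (fibStr (i + u.length)).length := by
    rw [length_fibStr]; have := Nat.le_fib_add_one (i + u.length + 2); omega
  exact ⟨_, infix_of_factorAt_zero (factorAt_zero_fibStr _) hi hlen⟩

theorem mem_fac_fibWord_iff_infix_fibSubst {u : List ℕ} :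
    u ∈ Fac fibWord ↔ ∃ k, u <:+: fibSubst (fibStr k) :=
  ⟨fun h => let ⟨k, hk⟩ := mem_fac_fibWord_iff.1 h
    ⟨k, hk.trans (fibStr_prefix_of_le k.le_succ).isInfix⟩,
   fun ⟨k, hk⟩ => mem_fac_fibWord_iff.2 ⟨k + 1, hk⟩⟩

theorem le_one_of_mem_fac {u : List ℕ} (hu : u ∈ Fac fibWord) {a : ℕ} (ha : a ∈ u) : a ≤ 1 :=
  let ⟨_, hk⟩ := mem_fac_fibWord_iff_infix_fibSubst.1 hu
  le_one_of_mem_fibSubst (hk.subset ha)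

theorem fibWord_le_one (m : ℕ) : fibWord m ≤ 1 :=
  le_one_of_mem_fac (u := [fibWord m]) ⟨m, factorAt_cons.2 ⟨rfl, rfl⟩⟩ (List.mem_singleton_self _)

theorem fibSubst_mem_fac {x : List ℕ} (hx : x ∈ Fac fibWord) : fibSubst x ∈ Fac fibWord :=
  let ⟨k, hk⟩ := mem_fac_fibWord_iff.1 hx
  mem_fac_fibWord_iff.2 ⟨k + 1, hk.flatMap fibMorph⟩

theorem not_one_one_infix_fibSubst (x : List ℕ) : ¬ [1, 1] <:+: fibSubst x := by
  rintro ⟨s, r, h⟩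
  rcases fibSubst_eq_append (a := s) (b := 1 :: 1 :: r) (by rw [← h]; simp) with
    ⟨_, _, -, -, h⟩ | ⟨_, _, -, -, h⟩
  · exact fibSubst_ne_one_cons _ _ h.symm
  · exact fibSubst_ne_one_cons _ _ (List.cons.inj h).2.symm

theorem one_one_not_mem_fac : [1, 1] ∉ Fac fibWord := fun h =>
  let ⟨_, hk⟩ := mem_fac_fibWord_iff_infix_fibSubst.1 h
  not_one_one_infix_fibSubst _ hk

/-- Desubstitution: the trailing `0` forces the occurrence of `fibSubst x` to be aligned with the
blocks of the Fibonacci word. -/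
theorem mem_fac_of_fibSubst_append_zero_mem_fac {x : List ℕ} (hx : ∀ a ∈ x, a ≤ 1)
    (h : fibSubst x ++ [0] ∈ Fac fibWord) : x ∈ Fac fibWord := by
  obtain ⟨k, s, r, hk⟩ := mem_fac_fibWord_iff_infix_fibSubst.1 h
  rcases fibSubst_eq_append (a := s) (b := fibSubst x ++ 0 :: r) (by rw [← hk]; simp) with
    ⟨w₁, w₂, hw, -, h₂⟩ | ⟨_, _, -, -, h₂⟩
  · have hk' : fibStr k ∈ Fac fibWord := ⟨0, factorAt_zero_fibStr k⟩
    have hx₂ : x <+: w₂ := prefix_of_fibSubst_eq_fibSubst_append hx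
      (fun a ha => le_one_of_mem_fac hk' (by rw [hw]; simp [ha])) h₂.symm
    exact mem_fac_of_infix (hx₂.isInfix.trans ⟨w₁, [], by rw [hw, List.append_nil]⟩) hk'
  · exact (fibSubst_append_zero_cons_ne_one_cons _ _ _ h₂).elim

theorem fibSubst_append_zero_mem_fac {x : List ℕ} (hx : x ∈ Fac fibWord) :
    fibSubst x ++ [0] ∈ Fac fibWord := by
  obtain ⟨m, hm⟩ := exists_append_singleton_mem_fac hx
  refine mem_fac_of_infix ⟨[], (fibMorph (fibWord m)).tail, ?_⟩ (fibSubst_mem_fac hm)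
  simp [fibSubst_cons]

theorem zero_zero_zero_not_mem_fac : [0, 0, 0] ∉ Fac fibWord := fun h =>
  one_one_not_mem_fac (mem_fac_of_fibSubst_append_zero_mem_fac (by simp) h)

theorem append_one_zero_mem_fac {u : List ℕ} (h : u ++ [1] ∈ Fac fibWord) :
    u ++ [1, 0] ∈ Fac fibWord := by
  obtain ⟨m, hm⟩ := exists_append_singleton_mem_fac h
  rcases Nat.le_one_iff_eq_zero_or_eq_one.1 (fibWord_le_one m) with h0 | h1
  · simpa [h0] using hm
  · exact (one_one_not_mem_fac (mem_fac_of_infix ⟨u, [], by simp [h1]⟩ hm)).elim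

theorem zero_cons_one_cons_mem_fac {u : List ℕ} (h : 1 :: u ∈ Fac fibWord) :
    0 :: 1 :: u ∈ Fac fibWord := by
  obtain ⟨i, hi⟩ := h
  obtain ⟨hi1, -⟩ := factorAt_cons.1 hi
  obtain ⟨i, rfl⟩ : ∃ j, i = j + 1 :=
    Nat.exists_eq_succ_of_ne_zero (by rintro rfl; exact absurd hi1 (by decide))
  refine ⟨i, factorAt_cons.2 ⟨?_, hi⟩⟩
  rcases Nat.le_one_iff_eq_zero_or_eq_one.1 (fibWord_le_one i) with h0 | h1
  · exact h0
  · exact (one_one_not_mem_fac ⟨i, factorAt_cons.2 ⟨h1, factorAt_cons.2 ⟨hi1, rfl⟩⟩⟩).elim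

/-! ### Words all of whose rotations are factors -/

theorem allRotationsIn_fibSubst {w : List ℕ} (hw : AllRotationsIn (Fac fibWord) w) :
    AllRotationsIn (Fac fibWord) (fibSubst w) := by
  intro v hv
  obtain ⟨a, b, hab, rfl⟩ := hv.exists_eq_append
  rcases fibSubst_eq_append hab with ⟨w₁, w₂, rfl, rfl, rfl⟩ | ⟨w₁, w₂, rfl, rfl, rfl⟩
  · rw [← fibSubst_append]
    exact fibSubst_mem_fac (hw _ List.isRotated_append)
  · refine mem_fac_of_infix ⟨[0], [], ?_⟩
      (fibSubst_append_zero_mem_fac (hw (0 :: w₂ ++ w₁) List.isRotated_append))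
    simp [fibSubst_cons_zero]

theorem allRotationsIn_fac_fibStr (k : ℕ) : AllRotationsIn (Fac fibWord) (fibStr k) := by
  induction k with
  | zero =>
    intro v hv
    rw [← List.isRotated_singleton_iff'.1 hv]
    exact ⟨0, factorAt_zero_fibStr 0⟩
  | succ k ih => exact allRotationsIn_fibSubst ih

theorem allRotationsIn_fac_fibStr_append_self (k : ℕ) :
    AllRotationsIn (Fac fibWord) (fibStr k ++ fibStr k) := by
  induction k with
  | zero =>
    rintro v ⟨n, rfl⟩
    rw [show fibStr 0 ++ fibStr 0 = List.replicate 2 0 from rfl, List.rotate_replicate]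
    exact mem_fac_fibWord_iff.2 ⟨3, by decide⟩
  | succ k ih =>
    rw [fibStr_succ, ← fibSubst_append]
    exact allRotationsIn_fibSubst ih

theorem exists_isRotated_fibSubst {u : List ℕ} (hu : AllRotationsIn (Fac fibWord) u)
    (h1 : 1 ∈ u) (h2 : 2 ≤ u.length) : ∃ w, (∀ a ∈ w, a ≤ 1) ∧ u ~r fibSubst w := by
  obtain ⟨p, q, rfl⟩ := List.append_of_mem h1
  obtain ⟨c, r, hqp⟩ := List.exists_cons_of_ne_nil (l := q ++ p) (by
    rintro h
    have := congrArg List.length h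
    simp only [List.length_append, List.length_cons, List.length_nil] at this h2
    omega)
  have hc : p ++ 1 :: q ~r 1 :: c :: r := hqp ▸ List.isRotated_append
  obtain rfl : c = 0 := by
    have hf := hu _ hc
    have : c ≤ 1 := le_one_of_mem_fac hf (by simp)
    have : c ≠ 1 := by rintro rfl; exact one_one_not_mem_fac (mem_fac_of_infix ⟨[], r, rfl⟩ hf)
    omega
  have hrot : p ++ 1 :: q ~r 0 :: (r ++ [1]) := hc.trans List.IsRotated.cons_append_singleton
  have hv := hu _ hrot
  obtain ⟨w, hw, hσ⟩ := exists_fibSubst_eq_zero_cons (r ++ [1])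
    (fun a ha => le_one_of_mem_fac hv (List.mem_cons_of_mem _ ha))
    (fun h => one_one_not_mem_fac (mem_fac_of_infix (List.infix_cons h) hv))
  exact ⟨w, hw, hσ ▸ hrot⟩

theorem fibSubst_append_zero_mem_fac_of_allRotationsIn {x : List ℕ} (hx : ∀ a ∈ x, a ≤ 1)
    (h0 : 0 ∈ x) (h : AllRotationsIn (Fac fibWord) (fibSubst x)) :
    fibSubst x ++ [0] ∈ Fac fibWord := by
  rcases x with _ | ⟨a, z⟩
  · simp at h0
  obtain rfl | rfl : a = 0 ∨ a = 1 := by have := hx a (by simp); omega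
  · -- the rotation `1 :: fibSubst z ++ [0]` can only be preceded by `0`
    rw [fibSubst_cons_zero]
    exact zero_cons_one_cons_mem_fac (h (1 :: (fibSubst z ++ [0]))
      (by rw [fibSubst_cons_zero]; exact List.IsRotated.cons_append_singleton))
  rcases List.eq_nil_or_concat' z with rfl | ⟨y, b, rfl⟩
  · simp at h0
  obtain rfl | rfl : b = 0 ∨ b = 1 := by have := hx b (by simp); omega
  · have hσ : fibSubst (1 :: (y ++ [0])) = fibSubst (1 :: y) ++ [0] ++ [1] := by
      rw [← List.cons_append, fibSubst_append, List.append_assoc]; rfl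
    have := append_one_zero_mem_fac (hσ ▸ h.mem)
    rw [hσ]
    simpa using this
  · -- the rotation `1 :: 1 :: y` would make `000` a factor
    obtain ⟨c, y, rfl⟩ := List.exists_cons_of_ne_nil (l := y) (by rintro rfl; simp at h0)
    have := h _ (List.isRotated_append (l := 1 :: c :: y) (l' := [1])).fibSubst
    exact (zero_zero_zero_not_mem_fac (mem_fac_of_infix ⟨[], (fibMorph c).tail ++ fibSubst y,
      by simp [fibSubst_cons_of_ne_zero, fibSubst_cons c]⟩ this)).elim

theorem allRotationsIn_of_fibSubst {w : List ℕ} (hw : ∀ a ∈ w, a ≤ 1) (h0 : 0 ∈ w)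
    (h : AllRotationsIn (Fac fibWord) (fibSubst w)) : AllRotationsIn (Fac fibWord) w := by
  intro x hx
  have hx₁ : ∀ a ∈ x, a ≤ 1 := fun a ha => hw a (hx.mem_iff.2 ha)
  exact mem_fac_of_fibSubst_append_zero_mem_fac hx₁
    (fibSubst_append_zero_mem_fac_of_allRotationsIn hx₁ (hx.mem_iff.1 h0)
      (h.of_isRotated hx.fibSubst))

theorem eq_nil_or_eq_zero_or_eq_zero_zero {u : List ℕ} (hu : u ∈ Fac fibWord) (h1 : 1 ∉ u) :
    u = [] ∨ u = [0] ∨ u = [0, 0] := by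
  have hu0 : ∀ a ∈ u, a = 0 := fun a ha => by
    have := le_one_of_mem_fac hu ha
    have : a ≠ 1 := by rintro rfl; exact h1 ha
    omega
  match u, hu0 with
  | [], _ => simp
  | [a], h => simp [h a]
  | [a, b], h => simp [h a, h b]
  | a :: b :: c :: u, h =>
    exact (zero_zero_zero_not_mem_fac (mem_fac_of_infix ⟨[], u, by simp [h a, h b, h c]⟩ hu)).elim

theorem isRotated_of_allRotationsIn_fac {u : List ℕ} (hu : AllRotationsIn (Fac fibWord) u) :
    u = [] ∨ u = [1] ∨ ∃ k, u ~r fibStr k ∨ u ~r fibStr k ++ fibStr k := by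
  by_cases h1 : 1 ∈ u
  · rcases lt_or_ge u.length 2 with hlt | h2
    · have := List.length_pos_of_mem h1
      obtain ⟨a, rfl⟩ := (List.length_eq_one_iff (l := u)).1 (by omega)
      exact Or.inr (Or.inl (by simpa [eq_comm] using h1))
    obtain ⟨w, hw, huw⟩ := exists_isRotated_fibSubst hu h1 h2
    have h0 : 0 ∈ w := zero_mem_of_one_mem_fibSubst (huw.mem_iff.1 h1)
    have hlen : w.length < u.length := by
      rw [huw.perm.length_eq, length_fibSubst]
      have := List.count_pos_iff.2 h0
      omega
    rcases isRotated_of_allRotationsIn_fac (allRotationsIn_of_fibSubst hw h0 (hu.of_isRotated huw))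
      with rfl | rfl | ⟨k, hk | hk⟩
    · simp at h0
    · simp at h0
    · exact Or.inr (Or.inr ⟨k + 1, Or.inl (huw.trans hk.fibSubst)⟩)
    · refine Or.inr (Or.inr ⟨k + 1, Or.inr ?_⟩)
      rw [fibStr_succ, ← fibSubst_append]
      exact huw.trans hk.fibSubst
  · rcases eq_nil_or_eq_zero_or_eq_zero_zero hu.mem h1 with rfl | rfl | rfl
    · exact Or.inl rfl
    · exact Or.inr (Or.inr ⟨0, Or.inl (List.IsRotated.refl _)⟩)
    · exact Or.inr (Or.inr ⟨0, Or.inr (List.IsRotated.refl _)⟩)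
termination_by u.length
decreasing_by exact hlen

def fibLieReps : Set (List ℕ) :=
  {[], [1]} ∪ Set.range fibStr ∪ Set.range fun k => fibStr k ++ fibStr k

theorem allRotationsIn_fac_fibWord_iff {u : List ℕ} :
    AllRotationsIn (Fac fibWord) u ↔ ∃ v ∈ fibLieReps, u ~r v := by
  constructor
  · intro hu
    rcases isRotated_of_allRotationsIn_fac hu with rfl | rfl | ⟨k, hk | hk⟩
    · exact ⟨[], by simp [fibLieReps], List.IsRotated.refl _⟩
    · exact ⟨[1], by simp [fibLieReps], List.IsRotated.refl _⟩
    · exact ⟨_, by simp [fibLieReps], hk⟩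
    · exact ⟨_, Or.inr ⟨k, rfl⟩, hk⟩
  · rintro ⟨v, hv, huv⟩
    refine AllRotationsIn.of_isRotated ?_ huv.symm
    obtain ((rfl | rfl) | ⟨k, rfl⟩) | ⟨k, rfl⟩ := hv
    · rintro v hv
      rw [← List.isRotated_nil_iff'.1 hv]
      exact ⟨0, rfl⟩
    · rintro v hv
      rw [← List.isRotated_singleton_iff'.1 hv]
      exact ⟨1, factorAt_cons.2 ⟨rfl, rfl⟩⟩
    · exact allRotationsIn_fac_fibStr k
    · exact allRotationsIn_fac_fibStr_append_self k

/-! ### Counting rotation classes -/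

theorem fib_add_three_add_fib (j : ℕ) : Nat.fib (j + 3) + Nat.fib j = 2 * Nat.fib (j + 2) := by
  have h₂ : Nat.fib (j + 2) = Nat.fib j + Nat.fib (j + 1) := Nat.fib_add_two
  have h₃ : Nat.fib (j + 3) = Nat.fib (j + 1) + Nat.fib (j + 2) := Nat.fib_add_two
  omega

theorem fib_add_two_eq_two_mul_fib_add_two_iff {i j : ℕ} :
    Nat.fib (j + 2) = 2 * Nat.fib (i + 2) ↔ j = 1 ∧ i = 0 := by
  refine ⟨fun h => ?_, by rintro ⟨rfl, rfl⟩; rfl⟩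
  obtain rfl : i = 0 := by
    -- otherwise `fib (i + 3) < 2 * fib (i + 2) < fib (i + 4)`
    by_contra hi
    have h₃ : Nat.fib (i + 3) = Nat.fib (i + 1) + Nat.fib (i + 2) := Nat.fib_add_two
    have h₄ : Nat.fib (i + 4) = Nat.fib (i + 2) + Nat.fib (i + 3) := Nat.fib_add_two
    have hlt : Nat.fib (i + 1) < Nat.fib (i + 2) := Nat.fib_lt_fib_succ (by omega)
    have hpos : 0 < Nat.fib (i + 1) := Nat.fib_pos.2 (by omega)
    rcases le_or_gt j (i + 1) with hj | hj
    · have := Nat.fib_mono (show j + 2 ≤ i + 3 by omega); omega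
    · have := Nat.fib_mono (show i + 4 ≤ j + 2 by omega); omega
  exact ⟨Nat.fib_add_two_strictMono.injective (h.trans rfl), rfl⟩

theorem length_fibStr_append_self (k : ℕ) :
    (fibStr k ++ fibStr k).length = 2 * Nat.fib (k + 2) := by
  rw [List.length_append, length_fibStr, two_mul]

theorem mem_fibLieReps {v : List ℕ} : v ∈ fibLieReps ↔
    v = [] ∨ v = [1] ∨ (∃ k, fibStr k = v) ∨ ∃ k, fibStr k ++ fibStr k = v := by
  simp [fibLieReps, or_assoc]

theorem fibLieReps_length_zero : {v ∈ fibLieReps | v.length = 0} = {[]} := by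
  ext v
  simp only [Set.mem_singleton_iff, mem_fibLieReps]
  constructor
  · rintro ⟨rfl | rfl | ⟨j, rfl⟩ | ⟨j, rfl⟩, hlen⟩ <;> simp_all [length_fibStr]
  · rintro rfl
    exact ⟨Or.inl rfl, rfl⟩

theorem fibLieReps_length_one : {v ∈ fibLieReps | v.length = 1} = {[0], [1]} := by
  ext v
  simp only [Set.mem_insert_iff, Set.mem_singleton_iff, mem_fibLieReps]
  constructor
  · rintro ⟨rfl | rfl | ⟨j, rfl⟩ | ⟨j, rfl⟩, hlen⟩
    · simp at hlen
    · exact Or.inr rfl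
    · rw [length_fibStr] at hlen
      obtain rfl : j = 0 := Nat.fib_add_two_strictMono.injective (hlen.trans rfl)
      exact Or.inl rfl
    · rw [length_fibStr_append_self] at hlen
      omega
  · rintro (rfl | rfl)
    · exact ⟨Or.inr (Or.inr (Or.inl ⟨0, rfl⟩)), rfl⟩
    · exact ⟨Or.inr (Or.inl rfl), rfl⟩

theorem fibLieReps_length_two : {v ∈ fibLieReps | v.length = 2} = {[0, 1], [0, 0]} := by
  ext v
  simp only [Set.mem_insert_iff, Set.mem_singleton_iff, mem_fibLieReps]
  constructor
  · rintro ⟨rfl | rfl | ⟨j, rfl⟩ | ⟨j, rfl⟩, hlen⟩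
    · simp at hlen
    · simp at hlen
    · rw [length_fibStr] at hlen
      obtain rfl : j = 1 := Nat.fib_add_two_strictMono.injective (hlen.trans rfl)
      exact Or.inl rfl
    · rw [length_fibStr_append_self] at hlen
      obtain rfl : j = 0 := Nat.fib_add_two_strictMono.injective (show _ = 1 by omega)
      exact Or.inr rfl
  · rintro (rfl | rfl)
    · exact ⟨Or.inr (Or.inr (Or.inl ⟨1, rfl⟩)), rfl⟩
    · exact ⟨Or.inr (Or.inr (Or.inr ⟨0, rfl⟩)), rfl⟩

theorem fibLieReps_length_fib {k : ℕ} (hk : 2 ≤ k) :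
    {v ∈ fibLieReps | v.length = Nat.fib (k + 2)} = {fibStr k} := by
  have h₃ : 3 ≤ Nat.fib (k + 2) := le_trans (by decide) (Nat.fib_mono (show 4 ≤ k + 2 by omega))
  ext v
  simp only [Set.mem_singleton_iff, mem_fibLieReps]
  constructor
  · rintro ⟨rfl | rfl | ⟨j, rfl⟩ | ⟨j, rfl⟩, hlen⟩
    · simp only [List.length_nil] at hlen; omega
    · simp only [List.length_singleton] at hlen; omega
    · rw [length_fibStr] at hlen
      rw [Nat.fib_add_two_strictMono.injective hlen]
    · rw [length_fibStr_append_self, eq_comm, fib_add_two_eq_two_mul_fib_add_two_iff] at hlen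
      omega
  · rintro rfl
    exact ⟨Or.inr (Or.inr (Or.inl ⟨k, rfl⟩)), length_fibStr k⟩

theorem fibLieReps_length_two_mul_fib {k : ℕ} (hk : 1 ≤ k) :
    {v ∈ fibLieReps | v.length = 2 * Nat.fib (k + 2)} = {fibStr k ++ fibStr k} := by
  have h₂ : 2 ≤ Nat.fib (k + 2) := le_trans (by decide) (Nat.fib_mono (show 3 ≤ k + 2 by omega))
  ext v
  simp only [Set.mem_singleton_iff, mem_fibLieReps]
  constructor
  · rintro ⟨rfl | rfl | ⟨j, rfl⟩ | ⟨j, rfl⟩, hlen⟩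
    · simp only [List.length_nil] at hlen; omega
    · simp only [List.length_singleton] at hlen; omega
    · rw [length_fibStr, fib_add_two_eq_two_mul_fib_add_two_iff] at hlen
      omega
    · rw [length_fibStr_append_self] at hlen
      rw [Nat.fib_add_two_strictMono.injective (show Nat.fib (j + 2) = Nat.fib (k + 2) by omega)]
  · rintro rfl
    exact ⟨Or.inr (Or.inr (Or.inr ⟨k, rfl⟩)), length_fibStr_append_self k⟩

theorem length_of_mem_fibLieReps {v : List ℕ} (hv : v ∈ fibLieReps) :
    v.length = 0 ∨ (∃ k, 2 ≤ k ∧ v.length = Nat.fib (k + 2)) ∨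
      (∃ k, 1 ≤ k ∧ v.length = 2 * Nat.fib (k + 2)) ∨ v.length = 1 ∨ v.length = 2 := by
  rcases mem_fibLieReps.1 hv with rfl | rfl | ⟨j, rfl⟩ | ⟨j, rfl⟩
  · simp
  · simp
  · obtain hj | rfl | rfl : 2 ≤ j ∨ j = 0 ∨ j = 1 := by omega
    · exact Or.inr (Or.inl ⟨j, hj, length_fibStr j⟩)
    · simp [fibStr]
    · simp [fibStr, fibMorph]
  · obtain hj | rfl : 1 ≤ j ∨ j = 0 := by omega
    · exact Or.inr (Or.inr (Or.inl ⟨j, hj, length_fibStr_append_self j⟩))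
    · simp [fibStr]

theorem lie_fibonacci (n : ℕ) :
    ((n = 0 ∨ (∃ k : ℕ, 4 ≤ k ∧ n = Nat.fib k) ∨
        (∃ k : ℕ, 4 ≤ k ∧ n = Nat.fib k + Nat.fib (k - 3))) →
      LieComplexity fibWord n = 1) ∧
    ((n = 1 ∨ n = 2) → LieComplexity fibWord n = 2) ∧
    (¬ (n = 0 ∨ (∃ k : ℕ, 4 ≤ k ∧ n = Nat.fib k) ∨
        (∃ k : ℕ, 4 ≤ k ∧ n = Nat.fib k + Nat.fib (k - 3)) ∨ n = 1 ∨ n = 2) →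
      LieComplexity fibWord n = 0) := by
  have hfib : (∃ k : ℕ, 4 ≤ k ∧ n = Nat.fib k) ↔ ∃ k, 2 ≤ k ∧ n = Nat.fib (k + 2) :=
    ⟨fun ⟨k, hk, h⟩ => ⟨k - 2, by omega, by rwa [Nat.sub_add_cancel (by omega)]⟩,
      fun ⟨k, hk, h⟩ => ⟨k + 2, by omega, h⟩⟩
  have htwo : (∃ k : ℕ, 4 ≤ k ∧ n = Nat.fib k + Nat.fib (k - 3)) ↔
      ∃ k, 1 ≤ k ∧ n = 2 * Nat.fib (k + 2) :=
    ⟨fun ⟨k, hk, h⟩ => ⟨k - 3, by omega,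
        by rw [h, ← fib_add_three_add_fib, Nat.sub_add_cancel (by omega)]⟩,
      fun ⟨k, hk, h⟩ => ⟨k + 3, by omega, by rw [h, Nat.add_sub_cancel, fib_add_three_add_fib]⟩⟩
  rw [hfib, htwo, lieComplexity_eq_ncard_image (fun _ => allRotationsIn_fac_fibWord_iff)]
  refine ⟨?_, ?_, fun h => ?_⟩
  · rintro (rfl | ⟨k, hk, rfl⟩ | ⟨k, hk, rfl⟩)
    · rw [fibLieReps_length_zero, Set.image_singleton, Set.ncard_singleton]
    · rw [fibLieReps_length_fib hk, Set.image_singleton, Set.ncard_singleton]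
    · rw [fibLieReps_length_two_mul_fib hk, Set.image_singleton, Set.ncard_singleton]
  · rintro (rfl | rfl)
    · rw [fibLieReps_length_one, Set.image_pair, Set.ncard_pair (by decide)]
    · rw [fibLieReps_length_two, Set.image_pair, Set.ncard_pair (by decide)]
  · have hempty : {v ∈ fibLieReps | v.length = n} = ∅ :=
      Set.eq_empty_of_forall_notMem fun v ⟨hv, hlen⟩ => h (hlen ▸ length_of_mem_fibLieReps hv)
    rw [hempty, Set.image_empty, Set.ncard_empty]
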